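/- arXiv:0712.1631 — 3 statements merged into one kernel-verified Lean document; each statement's English description precedes it below -/
import Mathlib

section
/- Let Γ be a finite additive abelian group, S a multiset of elements of Γ with Cayley sum adjacency matrix A_S, and χ : Γ → ℂ an additive character that is not real-valued. Let α ∈ ℂ satisfy |α| = 1 and α² · χ(S) = |χ(S)|, and set x(v) = α·χ(v) for v ∈ Γ. Then A_S · x = |χ(S)| · conj(x), where conj(x) is the entrywise complex conjugate of x. -/
/-!
Since `χ` is a character, the row `u` of `A_S` applied to `χ` is, after the substitution
`w = u + v`, equal to `χ(-u) · χ(S)`, and `χ(-u) = conj (χ u)` because characters of a finite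
group take values on the unit circle. The phase `α` is chosen so that `α · χ(S) = conj α · |χ(S)|`,
which turns `α · χ(S) · conj (χ u)` into `|χ(S)| · conj (α · χ u)`.
-/

open Matrix ComplexConjugate

lemma Multiset.sum_map_eq_sum_count_nsmul {ι M : Type*} [DecidableEq ι] [Fintype ι]
    [AddCommMonoid M] (S : Multiset ι) (f : ι → M) :
    (S.map f).sum = ∑ i, S.count i • f i := by
  rw [Finset.sum_multiset_map_count]
  exact Finset.sum_subset (Finset.subset_univ _) fun i _ hi ↦ by
    rw [Multiset.count_eq_zero.mpr (by simpa using hi), zero_smul]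

def cayleySumMatrix {Γ : Type*} [AddCommGroup Γ] [DecidableEq Γ] (R : Type*) [Semiring R]
    (S : Multiset Γ) : Matrix Γ Γ R :=
  Matrix.of fun u v ↦ (S.count (u + v) : R)

lemma cayleySumMatrix_mulVec_addChar {Γ R : Type*} [AddCommGroup Γ] [Fintype Γ] [DecidableEq Γ]
    [CommRing R] (S : Multiset Γ) (ψ : AddChar Γ R) :
    cayleySumMatrix R S *ᵥ ψ = fun u ↦ (S.map ψ).sum * ψ (-u) := by
  funext u
  calc (cayleySumMatrix R S *ᵥ ψ) u = ∑ v, (S.count (u + v) : R) * ψ v := rfl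
    _ = ∑ w, (S.count w : R) * ψ (-u + w) :=
        Fintype.sum_equiv (Equiv.addLeft u) _ _ fun v ↦ by simp
    _ = (S.map ψ).sum * ψ (-u) := by
        simp only [AddChar.map_add_eq_mul, Multiset.sum_map_eq_sum_count_nsmul, nsmul_eq_mul,
          Finset.sum_mul]
        exact Finset.sum_congr rfl fun _ _ ↦ by ring

lemma Complex.mul_eq_conj_mul_norm_of_sq_mul_eq_norm {α z : ℂ} (hα : ‖α‖ = 1)
    (h : α ^ 2 * z = ‖z‖) : α * z = conj α * ‖z‖ := by
  have hα' : conj α * α = 1 := by rw [Complex.conj_mul', hα]; norm_num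
  rw [← h, ← mul_assoc, sq, ← mul_assoc, hα', one_mul]

theorem cayley_sum_twisted_character_general
    {Γ : Type*} [AddCommGroup Γ] [Fintype Γ] [DecidableEq Γ]
    (S : Multiset Γ) (χ : Γ → ℂ)
    (hχ0 : χ 0 = 1) (hχadd : ∀ a b : Γ, χ (a + b) = χ a * χ b)
    (α : ℂ) (hα : ‖α‖ = 1)
    (hα2 : α ^ 2 * (S.map χ).sum = (‖(S.map χ).sum‖ : ℂ)) :
    (Matrix.of fun u v : Γ => (S.count (u + v) : ℂ)).mulVec (fun v => α * χ v)
      = fun u => (‖(S.map χ).sum‖ : ℂ) * (starRingEnd ℂ) (α * χ u) := by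
  let ψ : AddChar Γ ℂ := ⟨χ, hχ0, hχadd⟩
  have hphase := Complex.mul_eq_conj_mul_norm_of_sq_mul_eq_norm hα hα2
  have hrow := cayleySumMatrix_mulVec_addChar S ψ
  funext u
  calc (cayleySumMatrix ℂ S *ᵥ (α • ⇑ψ)) u = α * (S.map χ).sum * ψ (-u) := by
        rw [mulVec_smul, hrow]; simp [ψ, mul_assoc]
    _ = ‖(S.map χ).sum‖ * conj (α * χ u) := by
        rw [hphase, AddChar.map_neg_eq_conj, map_mul]; simp only [ψ, AddChar.coe_mk]; ring

/-- Let `χ` be a non-real-valued additive character of a finite additive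
abelian group `Γ`, let `S` be a multiset of elements of `Γ` with Cayley sum adjacency
matrix `A_S(u,v) = m_S(u+v)`, and let `α ∈ ℂ` satisfy `|α| = 1` and
`α² · χ(S) = |χ(S)|`.  Setting `x v = α · χ v`, we have `A_S · x = |χ(S)| · conj x`. -/
theorem cayley_sum_twisted_character
    {Γ : Type*} [AddCommGroup Γ] [Fintype Γ] [DecidableEq Γ]
    (S : Multiset Γ) (χ : Γ → ℂ)
    (hχ0 : χ 0 = 1) (hχadd : ∀ a b : Γ, χ (a + b) = χ a * χ b)
    (hnotreal : ¬ ∀ a : Γ, (χ a).im = 0)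
    (α : ℂ) (hα : ‖α‖ = 1)
    (hα2 : α ^ 2 * (S.map χ).sum = (‖(S.map χ).sum‖ : ℂ)) :
    (Matrix.of fun u v : Γ => (S.count (u + v) : ℂ)).mulVec (fun v => α * χ v)
      = fun u => (‖(S.map χ).sum‖ : ℂ) * (starRingEnd ℂ) (α * χ u) :=
  cayley_sum_twisted_character_general S χ hχ0 hχadd α hα hα2
end

section
/- Let Γ be a finite additive abelian group that can be generated by two elements, and let S be a multiset of elements of Γ of cardinality 3 such that u+u ∉ S for every u ∈ Γ. Let A_S be the Cayley sum adjacency matrix, and assume −3 is not an eigenvalue of A_S. Then there exists a multiset L of nonnegative real numbers such that the multiset of eigenvalues of A_S equals {3,−1,−1,−1} + L + (−L). -/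
/-!
For a character `χ` of `Γ`, `A_S χ = σ(χ) χ̄` with `σ(χ) = ∑_{s ∈ S} χ(s)` (`charSum S χ`). Hence a
real character is an eigenvector with eigenvalue `σ(χ)`, while a pair `{χ, χ̄}` of non-real
characters spans an invariant plane on which `A_S` has eigenvalues `±|σ(χ)|`; these pairs make up
`L + (-L)`.

The real characters are the characters of `Γ/2Γ`, so there are at most four of them when `Γ` is
generated by two elements. Their eigenvalues are sums of three signs; the trivial character gives
`3`, and since no element of `S` lies in `2Γ`, orthogonality on `Γ/2Γ` makes the eigenvalues sum to
`0`. The at most three remaining ones are therefore `≥ -1` (as `-3` is excluded) and sum to `-3`, so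
they are `-1, -1, -1`.
-/

open Polynomial Finset Matrix ComplexConjugate

theorem Matrix.charpoly_eq_prod_of_basis_of_mulVec_eq_smul {K n ι : Type*} [Field K] [Fintype n]
    [DecidableEq n] [Fintype ι] [DecidableEq ι] (M : Matrix n n K) (b : Module.Basis ι K (n → K))
    (μ : ι → K) (hb : ∀ i, M *ᵥ b i = μ i • b i) : M.charpoly = ∏ i, (X - C (μ i)) := by
  have hdiag : LinearMap.toMatrix b b M.toLin' = Matrix.diagonal μ := by
    ext i j
    rw [LinearMap.toMatrix_apply, Matrix.toLin'_apply, hb, map_smul, b.repr_self,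
      Matrix.diagonal_apply]
    split_ifs with h <;> simp [h]
  rw [← Matrix.charpoly_diagonal, ← hdiag, LinearMap.charpoly_toMatrix, Matrix.charpoly_toLin']

theorem Multiset.eq_replicate_of_sum_eq_of_le {R : Type*} [CommRing R] [LinearOrder R]
    [IsStrictOrderedRing R] {m : Multiset R} {n : ℕ} {a : R} (ha : a < 0) (hcard : card m ≤ n)
    (hle : ∀ x ∈ m, a ≤ x) (hsum : m.sum = n * a) : m = replicate n a := by
  have hbound : card m • a ≤ m.sum := card_nsmul_le_sum hle
  rw [nsmul_eq_mul, hsum] at hbound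
  have hn : card m = n :=
    hcard.antisymm (by exact_mod_cast (mul_le_mul_right_of_neg ha).1 hbound)
  refine eq_replicate.2 ⟨hn, fun x hx => (hle x hx).antisymm' ?_⟩
  by_contra! hlt
  obtain ⟨m', rfl⟩ := exists_cons_of_mem hx
  have hm' : card m' • a ≤ m'.sum := card_nsmul_le_sum fun y hy => hle y (mem_cons_of_mem hy)
  rw [card_cons] at hn
  rw [sum_cons, ← hn] at hsum
  push_cast [add_mul, one_mul] at hsum
  rw [nsmul_eq_mul] at hm'
  linarith

section NegOrbitReps
variable (α : Type*) [Fintype α] [InvolutiveNeg α]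

/-- One element from each two-element orbit `{x, -x}`, picked through an arbitrary enumeration
of `α`. -/
noncomputable def negOrbitReps : Finset α :=
  {x | (Fintype.equivFin α x : ℕ) < Fintype.equivFin α (-x)}

variable {α}

lemma neg_ne_self_of_mem_negOrbitReps {x : α} (hx : x ∈ negOrbitReps α) : -x ≠ x := by
  intro h
  simp [negOrbitReps, h] at hx

lemma neg_mem_negOrbitReps_iff {x : α} (hx : -x ≠ x) :
    -x ∈ negOrbitReps α ↔ x ∉ negOrbitReps α := by
  have hne : (Fintype.equivFin α (-x) : ℕ) ≠ Fintype.equivFin α x := fun h =>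
    hx ((Fintype.equivFin α).injective (Fin.val_injective h))
  simp only [negOrbitReps, mem_filter, mem_univ, true_and, neg_neg]
  omega

lemma univ_val_eq_fixed_add_negOrbitReps [DecidableEq α] :
    (univ : Finset α).val =
      ({x | -x = x} : Finset α).val + (negOrbitReps α).val + (negOrbitReps α).val.map Neg.neg := by
  have hdisj : Disjoint (negOrbitReps α) ((negOrbitReps α).map (Equiv.neg α).toEmbedding) := by
    refine disjoint_left.2 fun x hx hx' => ?_
    rw [mem_map_equiv, Equiv.neg_symm, Equiv.neg_apply] at hx'
    exact (neg_mem_negOrbitReps_iff (neg_ne_self_of_mem_negOrbitReps hx)).1 hx' hx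
  have hrest : univ.filter (fun x : α => ¬-x = x) = (negOrbitReps α).disjUnion _ hdisj := by
    ext x
    rw [mem_filter, mem_disjUnion, mem_map_equiv, Equiv.neg_symm, Equiv.neg_apply]
    by_cases hx : -x = x
    · simpa [hx] using fun h => neg_ne_self_of_mem_negOrbitReps h hx
    · simp [hx, neg_mem_negOrbitReps_iff hx, em]
  calc (univ : Finset α).val
      = ({x | -x = x} : Finset α).val + (univ.filter fun x : α => ¬-x = x).val :=
        (Multiset.filter_add_not _ _).symm
    _ = _ := by rw [hrest, add_assoc]; rfl

end NegOrbitReps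

lemma AddChar.apply_eq_one_or_eq_neg_one {A R : Type*} [AddCommGroup A] [CommRing R]
    [NoZeroDivisors R] {ψ : AddChar A R} (hψ : -ψ = ψ) (a : A) : ψ a = 1 ∨ ψ a = -1 := by
  refine mul_self_eq_one_iff.mp ?_
  calc ψ a * ψ a = ψ a * (-ψ) a := by rw [hψ]
    _ = 1 := by
      rw [AddChar.neg_apply, ← AddChar.map_add_eq_mul, add_neg_cancel, ψ.map_zero_eq_one]

lemma AddChar.eq_of_eqOn_closure {A M : Type*} [AddGroup A] [DivisionMonoid M]
    {ψ φ : AddChar A M} {s : Set A} (hs : AddSubgroup.closure s = ⊤) (h : s.EqOn ψ φ) : ψ = φ := by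
  ext x
  induction (hs ▸ AddSubgroup.mem_top x : x ∈ AddSubgroup.closure s) using
    AddSubgroup.closure_induction with
  | mem x hx => exact h hx
  | zero => simp
  | add x y _ _ hx hy => simp [AddChar.map_add_eq_mul, hx, hy]
  | neg x _ hx => simp [AddChar.map_neg_eq_inv, hx]

namespace CayleySum

variable {Γ : Type*} [AddCommGroup Γ]

def cayleySumMatrix (R : Type*) [Semiring R] [DecidableEq Γ] (S : Multiset Γ) : Matrix Γ Γ R :=
  Matrix.of fun u v => (S.count (u + v) : R)

noncomputable def charSum (S : Multiset Γ) (χ : AddChar Γ ℂ) : ℂ := (S.map χ).sum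

lemma re_charSum_eq_neg_three_or_neg_one_le {S : Multiset Γ} {χ : AddChar Γ ℂ}
    (hS : Multiset.card S = 3) (hχ : -χ = χ) : (charSum S χ).re = -3 ∨ -1 ≤ (charSum S χ).re := by
  obtain ⟨a, b, c, rfl⟩ := Multiset.card_eq_three.1 hS
  simp only [charSum, Multiset.insert_eq_cons, Multiset.map_cons, Multiset.sum_cons,
    Multiset.map_singleton, Multiset.sum_singleton, Complex.add_re]
  rcases AddChar.apply_eq_one_or_eq_neg_one hχ a with ha | ha <;>
  rcases AddChar.apply_eq_one_or_eq_neg_one hχ b with hb | hb <;>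
  rcases AddChar.apply_eq_one_or_eq_neg_one hχ c with hc | hc <;>
  norm_num [ha, hb, hc]

variable [Fintype Γ]

variable (Γ) in
/-- `-χ = χ` says `χ = χ̄`, i.e. `χ` is real-valued. -/
noncomputable def realAddChars : Finset (AddChar Γ ℂ) := {χ | -χ = χ}

@[simp]
lemma mem_realAddChars {χ : AddChar Γ ℂ} : χ ∈ realAddChars Γ ↔ -χ = χ := by
  simp [realAddChars]

lemma card_realAddChars_le {s : Finset Γ} (hs : AddSubgroup.closure (s : Set Γ) = ⊤) :
    #(realAddChars Γ) ≤ 2 ^ #s := by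
  classical
  let restrict : AddChar Γ ℂ → (s → ℂ) := fun χ x => χ x
  have hinj : Set.InjOn restrict (realAddChars Γ) := fun χ _ φ _ h =>
    AddChar.eq_of_eqOn_closure hs fun x hx => congrFun h ⟨x, hx⟩
  have hmaps : Set.MapsTo restrict (realAddChars Γ)
      (Fintype.piFinset fun _ : s => ({1, -1} : Finset ℂ)) := by
    intro χ hχ
    simpa [restrict] using fun x _ => AddChar.apply_eq_one_or_eq_neg_one (mem_realAddChars.1 hχ) x
  calc #(realAddChars Γ) ≤ #(Fintype.piFinset fun _ : s => ({1, -1} : Finset ℂ)) :=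
        card_le_card_of_injOn restrict hmaps hinj
    _ = 2 ^ #s := by simp [card_pair (show (1 : ℂ) ≠ -1 by norm_num)]

lemma exists_mem_realAddChars_apply_ne_one {s : Γ} (hs : ∀ u, u + u ≠ s) :
    ∃ χ ∈ realAddChars Γ, χ s ≠ 1 := by
  let π := QuotientAddGroup.mk' (nsmulAddMonoidHom (α := Γ) 2).range
  have hπs : π s ≠ 0 := by
    rw [Ne, QuotientAddGroup.mk'_apply, QuotientAddGroup.eq_zero_iff]
    rintro ⟨u, hu⟩
    exact hs u (by simpa [two_nsmul] using hu)
  obtain ⟨ψ, hψ⟩ := AddChar.exists_apply_ne_zero.mpr hπs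
  refine ⟨ψ.compAddMonoidHom π, ?_, hψ⟩
  have hπ2 (a : Γ) : π (-a) = π a := by
    rw [← sub_eq_zero, ← map_sub, QuotientAddGroup.mk'_apply, QuotientAddGroup.eq_zero_iff]
    exact ⟨-a, by simp [two_nsmul]; abel⟩
  rw [mem_realAddChars]
  ext a
  simp [hπ2]

lemma sum_realAddChars_apply_eq_zero {s : Γ} (hs : ∀ u, u + u ≠ s) :
    ∑ χ ∈ realAddChars Γ, χ s = 0 := by
  obtain ⟨χ₀, hχ₀, hχ₀s⟩ := exists_mem_realAddChars_apply_ne_one hs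
  have hmem (χ) : χ₀ + χ ∈ realAddChars Γ ↔ χ ∈ realAddChars Γ := by
    rw [mem_realAddChars] at hχ₀
    rw [mem_realAddChars, mem_realAddChars, neg_add, hχ₀, add_right_inj]
  have hshift : χ₀ s * ∑ χ ∈ realAddChars Γ, χ s = ∑ χ ∈ realAddChars Γ, χ s :=
    calc χ₀ s * ∑ χ ∈ realAddChars Γ, χ s = ∑ χ ∈ realAddChars Γ, (χ₀ + χ) s := by
          simp [mul_sum, AddChar.add_apply]
      _ = ∑ χ ∈ realAddChars Γ, χ s :=
          sum_equiv (Equiv.addLeft χ₀) (fun χ => (hmem χ).symm) fun _ _ => rfl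
  exact (mul_eq_zero.mp (by linear_combination hshift)).resolve_left (sub_ne_zero.mpr hχ₀s)

lemma sum_realAddChars_charSum_eq_zero {S : Multiset Γ} (hsemi : ∀ u, u + u ∉ S) :
    ∑ χ ∈ realAddChars Γ, charSum S χ = 0 :=
  calc ∑ χ ∈ realAddChars Γ, charSum S χ
        = (S.map fun s => ∑ χ ∈ realAddChars Γ, χ s).sum := by
        simp_rw [charSum, sum_eq_multiset_sum]
        exact Multiset.sum_map_sum_map _ _
    _ = 0 := Multiset.sum_eq_zero fun x hx => by
        obtain ⟨s, hs, rfl⟩ := Multiset.mem_map.1 hx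
        exact sum_realAddChars_apply_eq_zero fun u hu => hsemi u (hu ▸ hs)

lemma map_realAddChars_re_charSum {S : Multiset Γ} (hcard : #(realAddChars Γ) ≤ 4)
    (hS : Multiset.card S = 3) (hsemi : ∀ u, u + u ∉ S)
    (hne : ∀ χ ∈ realAddChars Γ, (charSum S χ).re ≠ -3) :
    (realAddChars Γ).val.map (fun χ => (charSum S χ).re) = {3, -1, -1, -1} := by
  set f := fun χ => (charSum S χ).re
  have h0 : 0 ∈ realAddChars Γ := by simp
  have hf0 : f 0 = 3 := by norm_num [f, charSum, hS]
  have hsum : ∑ χ ∈ realAddChars Γ, f χ = 0 := by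
    simpa [f, Complex.re_sum] using congrArg Complex.re (sum_realAddChars_charSum_eq_zero hsemi)
  have hrest : ((realAddChars Γ).erase 0).val.map f = Multiset.replicate 3 (-1) := by
    refine Multiset.eq_replicate_of_sum_eq_of_le (by norm_num) ?_ ?_ ?_
    · rw [Multiset.card_map, ← card_def, card_erase_of_mem h0]
      omega
    · intro x hx
      obtain ⟨χ, hχ, rfl⟩ := Multiset.mem_map.1 hx
      have hχ' := mem_of_mem_erase hχ
      exact (re_charSum_eq_neg_three_or_neg_one_le hS (mem_realAddChars.1 hχ')).resolve_left
        (hne χ hχ')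
    · rw [← sum_eq_multiset_sum]
      push_cast
      linarith [add_sum_erase _ f h0]
  rw [← insert_erase h0, insert_val_of_notMem (notMem_erase _ _), Multiset.map_cons, hrest, hf0]
  rfl

lemma charSum_neg (S : Multiset Γ) (χ : AddChar Γ ℂ) : charSum S (-χ) = conj (charSum S χ) := by
  rw [charSum, charSum, map_multiset_sum, Multiset.map_map]
  exact congrArg _ (Multiset.map_congr rfl fun s _ => AddChar.map_neg_eq_conj χ s)

noncomputable def eigenvalue (S : Multiset Γ) (χ : AddChar Γ ℂ) : ℝ :=
  if -χ = χ then (charSum S χ).re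
  else if χ ∈ negOrbitReps _ then ‖charSum S χ‖ else -‖charSum S χ‖

variable {S : Multiset Γ} {χ : AddChar Γ ℂ}

lemma eigenvalue_of_neg_eq (h : -χ = χ) : eigenvalue S χ = (charSum S χ).re := if_pos h

lemma ofReal_eigenvalue_of_neg_eq (h : -χ = χ) : (eigenvalue S χ : ℂ) = charSum S χ := by
  rw [eigenvalue_of_neg_eq h, ← Complex.conj_eq_iff_re, ← charSum_neg, h]

lemma eigenvalue_of_mem_negOrbitReps (h : χ ∈ negOrbitReps _) :
    eigenvalue S χ = ‖charSum S χ‖ := by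
  rw [eigenvalue, if_neg (neg_ne_self_of_mem_negOrbitReps h), if_pos h]

lemma ofReal_eigenvalue_sq_of_neg_ne (h : -χ ≠ χ) :
    (eigenvalue S χ : ℂ) ^ 2 = charSum S χ * conj (charSum S χ) := by
  rw [Complex.mul_conj', eigenvalue, if_neg h]
  split_ifs <;> push_cast <;> ring

lemma eigenvalue_neg (h : -χ ≠ χ) : eigenvalue S (-χ) = -eigenvalue S χ := by
  have h' : -(-χ) ≠ -χ := by rwa [neg_neg, ne_comm]
  rw [eigenvalue, eigenvalue, if_neg h, if_neg h', charSum_neg, Complex.norm_conj]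
  by_cases hχ : χ ∈ negOrbitReps _ <;> simp [hχ, neg_mem_negOrbitReps_iff h]

lemma eigenvalue_eq_zero (h : charSum S χ = 0) : eigenvalue S χ = 0 := by
  simp [eigenvalue, h]

variable (S χ)

/-- `A_S χ = σ(χ) χ̄` and `A_S χ̄ = σ̄(χ) χ`, so `ρ χ + σ(χ) χ̄` is an eigenvector for `ρ` whenever
`ρ² = |σ(χ)|²`. -/
noncomputable def eigenvector : Γ → ℂ :=
  if -χ = χ ∨ charSum S χ = 0 then ⇑χ else (eigenvalue S χ : ℂ) • ⇑χ + charSum S χ • ⇑(-χ)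

lemma addChar_mem_span_range_eigenvector :
    ⇑χ ∈ Submodule.span ℂ (Set.range (eigenvector S)) := by
  have hmem (ψ) : eigenvector S ψ ∈ Submodule.span ℂ (Set.range (eigenvector S)) :=
    Submodule.subset_span ⟨ψ, rfl⟩
  by_cases h : -χ = χ ∨ charSum S χ = 0
  · simpa [eigenvector, if_pos h] using hmem χ
  obtain ⟨hfix, hzero⟩ := not_or.1 h
  have h' : ¬(-(-χ) = -χ ∨ charSum S (-χ) = 0) := by
    simpa [charSum_neg, eq_comm (a := χ)] using not_or.1 h
  have hsq := ofReal_eigenvalue_sq_of_neg_ne (S := S) hfix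
  have hnorm : (2 * ‖charSum S χ‖ ^ 2 : ℂ) ≠ 0 := by simpa using hzero
  have hcomb : (eigenvalue S χ : ℂ) • eigenvector S χ + charSum S χ • eigenvector S (-χ)
      = (2 * ‖charSum S χ‖ ^ 2 : ℂ) • ⇑χ := by
    rw [eigenvector, if_neg h, eigenvector, if_neg h', eigenvalue_neg hfix, charSum_neg, neg_neg]
    ext u
    simp only [Pi.add_apply, Pi.smul_apply, smul_eq_mul, Complex.ofReal_neg]
    rw [← Complex.mul_conj']
    linear_combination (χ u) * hsq
  rw [← inv_smul_smul₀ hnorm ⇑χ, ← hcomb]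
  exact Submodule.smul_mem _ _
    (add_mem (Submodule.smul_mem _ _ (hmem χ)) (Submodule.smul_mem _ _ (hmem (-χ))))

lemma top_le_span_range_eigenvector : ⊤ ≤ Submodule.span ℂ (Set.range (eigenvector S)) := by
  rw [← (AddChar.complexBasis Γ).span_eq, AddChar.coe_complexBasis, Submodule.span_le]
  rintro _ ⟨χ, rfl⟩
  exact addChar_mem_span_range_eigenvector S χ

section Matrix

variable [DecidableEq Γ]

lemma sum_count_mul_eq_charSum : ∑ w, (S.count w : ℂ) * χ w = charSum S χ := by
  rw [charSum, sum_multiset_map_count, ← sum_subset (subset_univ S.toFinset)]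
  · simp [nsmul_eq_mul]
  · intro w _ hw
    simp [Multiset.count_eq_zero.2 (fun h => hw (Multiset.mem_toFinset.2 h))]

lemma cayleySumMatrix_mulVec_addChar : cayleySumMatrix ℂ S *ᵥ ⇑χ = charSum S χ • ⇑(-χ) := by
  ext u
  calc ∑ v, (S.count (u + v) : ℂ) * χ v = ∑ w, (S.count w : ℂ) * (χ (-u) * χ w) :=
        Fintype.sum_equiv (Equiv.addLeft u) _ _ fun v => by
          simp [← AddChar.map_add_eq_mul]
    _ = charSum S χ * (-χ) u := by
          simp_rw [mul_left_comm _ (χ (-u)), ← mul_sum, sum_count_mul_eq_charSum, mul_comm,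
            AddChar.neg_apply]

lemma cayleySumMatrix_mulVec_eigenvector :
    cayleySumMatrix ℂ S *ᵥ eigenvector S χ = (eigenvalue S χ : ℂ) • eigenvector S χ := by
  unfold eigenvector
  split_ifs with h
  · rw [cayleySumMatrix_mulVec_addChar]
    obtain h | h := h
    · rw [h, ofReal_eigenvalue_of_neg_eq h]
    · rw [h, eigenvalue_eq_zero h, zero_smul, Complex.ofReal_zero, zero_smul]
  · rw [not_or] at h
    have hsq := ofReal_eigenvalue_sq_of_neg_ne (S := S) h.1
    ext u
    simp only [mulVec_add, mulVec_smul, cayleySumMatrix_mulVec_addChar, charSum_neg, neg_neg,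
      Pi.add_apply, Pi.smul_apply, smul_eq_mul]
    linear_combination (-χ u) * hsq

lemma charpoly_cayleySumMatrix :
    (cayleySumMatrix ℝ S).charpoly = ∏ χ, (X - C (eigenvalue S χ)) := by
  let b := basisOfTopLeSpanOfCardEqFinrank (eigenvector S) (top_le_span_range_eigenvector S)
    (by rw [AddChar.card_eq, Module.finrank_fintype_fun_eq_card])
  have hmap : (cayleySumMatrix ℝ S).map (algebraMap ℝ ℂ) = cayleySumMatrix ℂ S := by
    ext; simp [cayleySumMatrix]
  apply map_injective (algebraMap ℝ ℂ) (algebraMap ℝ ℂ).injective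
  rw [← charpoly_map, hmap, Polynomial.map_prod]
  simp only [Polynomial.map_sub, map_X, map_C]
  refine charpoly_eq_prod_of_basis_of_mulVec_eq_smul _ b _ fun χ => ?_
  simpa [b, coe_basisOfTopLeSpanOfCardEqFinrank] using cayleySumMatrix_mulVec_eigenvector S χ

lemma roots_charpoly_cayleySumMatrix :
    (cayleySumMatrix ℝ S).charpoly.roots =
      (realAddChars Γ).val.map (fun χ => (charSum S χ).re) +
        (negOrbitReps _).val.map (fun χ => ‖charSum S χ‖) +
        ((negOrbitReps _).val.map (fun χ => ‖charSum S χ‖)).map (fun x => -x) := by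
  rw [charpoly_cayleySumMatrix, prod_eq_multiset_prod,
    show (fun χ => X - C (eigenvalue S χ)) = (fun x => X - C x) ∘ eigenvalue S from rfl,
    ← Multiset.map_map, roots_multiset_prod_X_sub_C, univ_val_eq_fixed_add_negOrbitReps,
    Multiset.map_add, Multiset.map_add, Multiset.map_map, Multiset.map_map]
  refine congrArg₂ (· + ·) (congrArg₂ (· + ·) ?_ ?_) ?_ <;>
    refine Multiset.map_congr rfl fun χ hχ => ?_
  · exact eigenvalue_of_neg_eq (mem_realAddChars.1 hχ)
  · exact eigenvalue_of_mem_negOrbitReps hχ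
  · simp [eigenvalue_neg (neg_ne_self_of_mem_negOrbitReps hχ),
      eigenvalue_of_mem_negOrbitReps hχ]

end Matrix

end CayleySum

open CayleySum

/-- algebraic core of Fowler's conjecture: Let `Γ` be a finite additive
abelian group generated by two elements and `S` a multiset of elements of `Γ` with
`|S| = 3` such that `u + u ∉ S` for all `u` (no semiedges).  If `−3` is not an
eigenvalue of the real Cayley sum adjacency matrix `A_S(u,v) = m_S(u+v)`, then there is
a multiset `L` of nonnegative reals such that the multiset of eigenvalues of `A_S`
equals `{3,−1,−1,−1} + L + (−L)`. -/
theorem fowler_conjecture_cayley_sum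
    {Γ : Type*} [AddCommGroup Γ] [Fintype Γ] [DecidableEq Γ]
    (hgen : ∃ a b : Γ, AddSubgroup.closure {a, b} = ⊤)
    (S : Multiset Γ) (hS : Multiset.card S = 3)
    (hsemi : ∀ u : Γ, u + u ∉ S)
    (hev : ¬ (Matrix.charpoly
        (Matrix.of fun u v : Γ => (S.count (u + v) : ℝ))).IsRoot (-3)) :
    ∃ L : Multiset ℝ, (∀ x ∈ L, 0 ≤ x) ∧
      (Matrix.charpoly (Matrix.of fun u v : Γ => (S.count (u + v) : ℝ))).roots
        = ({3, -1, -1, -1} : Multiset ℝ) + L + L.map (fun x => -x) := by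
  obtain ⟨a, b, hab⟩ := hgen
  have hroots := roots_charpoly_cayleySumMatrix S
  have hcard : #(realAddChars Γ) ≤ 4 :=
    (card_realAddChars_le (s := {a, b}) (by rwa [coe_pair])).trans
      (Nat.pow_le_pow_right two_pos card_le_two)
  have hne : ∀ χ ∈ realAddChars Γ, (charSum S χ).re ≠ -3 := fun χ hχ h3 =>
    hev <| isRoot_of_mem_roots <| hroots ▸
      Multiset.mem_add.2 (.inl (Multiset.mem_add.2 (.inl (Multiset.mem_map.2 ⟨χ, hχ, h3⟩))))
  rw [map_realAddChars_re_charSum hcard hS hsemi hne] at hroots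
  refine ⟨_, fun x hx => ?_, hroots⟩
  obtain ⟨χ, -, rfl⟩ := Multiset.mem_map.1 hx
  exact norm_nonneg _
end

section
/- Let Γ be a finite additive abelian group, S a multiset of elements of Γ with Cayley sum adjacency matrix A_S, and χ : Γ → ℂ an additive character that is not real-valued and satisfies χ(S) ≠ 0. Then the vector (χ(v))_{v∈Γ} is not an eigenvector of A_S; that is, there is no λ ∈ ℂ with A_S · χ = λ · χ. -/
/-- If `χ` is a non-real-valued additive character of a finite additive
abelian group `Γ` with `χ(S) ≠ 0`, where `S` is a multiset of elements of `Γ` with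
Cayley sum adjacency matrix `A_S(u,v) = m_S(u+v)`, then the vector `(χ v)_{v∈Γ}` is not
an eigenvector of `A_S`. -/
theorem cayley_sum_nonreal_character_not_eigenvector
    {Γ : Type*} [AddCommGroup Γ] [Fintype Γ] [DecidableEq Γ]
    (S : Multiset Γ) (χ : Γ → ℂ)
    (hχ0 : χ 0 = 1) (hχadd : ∀ a b : Γ, χ (a + b) = χ a * χ b)
    (hnotreal : ¬ ∀ a : Γ, (χ a).im = 0)
    (hSne : (S.map χ).sum ≠ 0) :
    ¬ ∃ lam : ℂ,
      (Matrix.of fun u v : Γ => (S.count (u + v) : ℂ)).mulVec χ = lam • χ := by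
  rintro ⟨lam, h⟩
  have hinv : ∀ a : Γ, χ a * χ (-a) = 1 := by
    intro a; rw [← hχadd, add_neg_cancel, hχ0]
  have hsum : (S.map χ).sum = ∑ w : Γ, (S.count w : ℂ) * χ w := by
    rw [Finset.sum_multiset_map_count,
      Finset.sum_subset (Finset.subset_univ S.toFinset)]
    · simp [nsmul_eq_mul]
    · intro x _ hx
      simp [Multiset.count_eq_zero_of_notMem (by simpa using hx)]
  have key : ∀ u : Γ, (S.map χ).sum * χ (-u) = lam * χ u := by
    intro u
    have h1 := congrFun h u
    simp only [Matrix.mulVec, dotProduct, Matrix.of_apply, Pi.smul_apply,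
      smul_eq_mul] at h1
    rw [← h1]
    symm
    have h2 : ∀ v : Γ, (S.count (u + v) : ℂ) * χ v
        = (S.count (u + v) : ℂ) * χ (u + v) * χ (-u) := by
      intro v
      have : χ (u + v) * χ (-u) = χ v := by
        rw [← hχadd, add_comm u v, add_assoc, add_neg_cancel, add_zero]
      rw [mul_assoc, this]
    calc ∑ v : Γ, (S.count (u + v) : ℂ) * χ v
        = ∑ v : Γ, (S.count (u + v) : ℂ) * χ (u + v) * χ (-u) := by
          exact Finset.sum_congr rfl fun v _ => h2 v
      _ = (∑ w : Γ, (S.count w : ℂ) * χ w) * χ (-u) := by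
          rw [Finset.sum_mul]
          exact Fintype.sum_equiv (Equiv.addLeft u) _ _ (fun v => rfl)
      _ = (S.map χ).sum * χ (-u) := by rw [hsum]
  have hlam : lam = (S.map χ).sum := by
    have := key 0
    simpa [hχ0, neg_zero] using this.symm
  apply hnotreal
  intro a
  have h3 : χ (-a) = χ a := by
    have := key a
    rw [hlam] at this
    exact mul_left_cancel₀ hSne this
  have h4 := hinv a
  rw [h3] at h4
  rcases mul_self_eq_one_iff.mp h4 with h | h <;> simp [h]
end
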